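/- If A is an element of a C*-algebra satisfying A*AA = A and AA*A* = A*, then A is normal (A*A = AA*) and A is a partial isometry (A = AA*A). -/
import Mathlib

/-- If `A` is an element of a C*-algebra satisfying `A* A A = A` and `A A* A* = A*`,
then `A` is normal and a partial isometry. -/
theorem stmt_0 {Q : Type*} [CStarAlgebra Q] (A : Q)
    (h1 : star A * A * A = A) (h2 : A * star A * star A = star A) :
    star A * A = A * star A ∧ A * star A * A = A := by
  have h3 : A * (A * star A) = A := by
    have := congrArg star h2
    simpa [star_mul, mul_assoc] using this
  have e1 : star A * A * A * star A = A * star A := by rw [h1]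
  have e2 : star A * A * A * star A = star A * A := by
    rw [mul_assoc, mul_assoc, h3]
  have key : star A * A = A * star A := e2.symm.trans e1
  exact ⟨key, by rw [← key, h1]⟩
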